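/- arXiv:2002.04790 — 2 statements merged into one kernel-verified Lean document; each statement's English description precedes it below -/
import Mathlib

section
/- Let A be an abelian category with enough projectives and injectives, X_A a full resolution of A obtained by splicing a projective resolution of A with an injective coresolution of A, and define ℓExtⁿ_A(A,B) := Hⁿ[Hom_A(X_A,B)]. If a morphism g : B → B' factors through an injective object, then the induced map ℓExtⁿ_A(A,g) : ℓExtⁿ_A(A,B) → ℓExtⁿ_A(A,B') is zero for every integer n. Consequently ℓExtⁿ_A(A,−) descends to a functor on the injective stable category St_I(A). -/
open CategoryTheory CategoryTheory.Limits

universe v u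

variable {C : Type u} [Category.{v} C] [Abelian C]

/-- A full resolution of `A`: an everywhere-exact `ℤ`-indexed complex with projective
components in nonnegative degrees and injective components in negative degrees, obtained by
splicing a projective resolution of `A` with an injective coresolution of `A`. -/
structure FullResolutionData (A : C) where
  c : ChainComplex C ℤ
  ε : c.X 0 ⟶ A
  η : A ⟶ c.X (-1)
  epi : Epi ε
  mono : Mono η
  fac : c.d 0 (-1) = ε ≫ η
  proj : ∀ n : ℤ, 0 ≤ n → Projective (c.X n)
  inj : ∀ n : ℤ, n < 0 → Injective (c.X n)
  exact : ∀ n : ℤ, (ShortComplex.mk (c.d (n + 1) n) (c.d n (n - 1)) (c.d_comp_d _ _ _)).Exact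

/-- if `g : B ⟶ B'` factors through an injective object, then the map
`Hⁿ[Hom(X_A, g)] : Hⁿ[Hom(X_A, B)] → Hⁿ[Hom(X_A, B')]` induced on the cohomology of the
`Hom`-complexes of a full resolution `X_A` is zero, in every degree `n ∈ ℤ`: the image of
every `n`-cocycle is an `n`-coboundary. -/
theorem statement4 [EnoughProjectives C] [EnoughInjectives C]
    (A B B' : C) (XA : FullResolutionData A)
    (g : B ⟶ B') (I : C) (hI : Injective I) (a : B ⟶ I) (b : I ⟶ B') (hg : g = a ≫ b)
    (n : ℤ) (f : XA.c.X n ⟶ B) (hf : XA.c.d (n + 1) n ≫ f = 0) :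
    ∃ t : XA.c.X (n - 1) ⟶ B', f ≫ g = XA.c.d n (n - 1) ≫ t := by
  haveI := hI
  have hS := XA.exact n
  have h0 : XA.c.d (n + 1) n ≫ (f ≫ a) = 0 := by
    rw [← Category.assoc, hf, zero_comp]
  refine ⟨hS.descToInjective (f ≫ a) h0 ≫ b, ?_⟩
  rw [hg, ← Category.assoc, ← Category.assoc]
  congr 1
  exact (hS.comp_descToInjective (f ≫ a) h0).symm
end

section
/- Let M = (Q, W, R) be a hereditary abelian model structure on an abelian category A. Given cofibrant replacements Q and loop functors Ω computed from arbitrary choices of short exact sequences, there are canonical isomorphisms in Ho(M): ΩⁿQA ≅ QΩⁿA and ΣⁿQA ≅ QΣⁿA for all n ≥ 0 (and dually ΩⁿRA ≅ RΩⁿA, ΣⁿRA ≅ RΣⁿA for fibrant replacement R). -/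
open CategoryTheory CategoryTheory.Limits

universe w v u

variable {C : Type u} [Category.{v} C] [Abelian C]

/-- A hereditary abelian model structure (Hovey triple) `(𝒬, 𝒲, ℛ)` on an abelian
category: `𝒲` is thick, `(𝒬, 𝒲 ∩ ℛ)` and `(𝒬 ∩ 𝒲, ℛ)` are complete cotorsion pairs, and
both cotorsion pairs are hereditary (`Extⁱ` vanishes for all `i ≥ 1`). -/
structure HoveyTriple (C : Type u) [Category.{v} C] [Abelian C] [HasExt.{w} C] where
  Q : C → Prop
  W : C → Prop
  R : C → Prop
  /-- `𝒲` is closed under retracts. -/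
  thick_retract : ∀ ⦃X Y : C⦄, (∃ (s : Y ⟶ X) (r : X ⟶ Y), s ≫ r = 𝟙 Y) → W X → W Y
  /-- `𝒲` satisfies the two-out-of-three property on short exact sequences. -/
  thick_two_of_three : ∀ ⦃X Y Z : C⦄ (i : X ⟶ Y) (p : Y ⟶ Z) (w : i ≫ p = 0),
    (ShortComplex.mk i p w).ShortExact →
      ((W X → W Y → W Z) ∧ (W X → W Z → W Y) ∧ (W Y → W Z → W X))
  /-- `Ext¹`-orthogonality of `𝒬` and `𝒲 ∩ ℛ`. -/
  orth₁ : ∀ ⦃X Y : C⦄, Q X → W Y → R Y → Subsingleton (Abelian.Ext X Y 1)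
  orth₁_left : ∀ ⦃X : C⦄, (∀ Y : C, W Y → R Y → Subsingleton (Abelian.Ext X Y 1)) → Q X
  orth₁_right : ∀ ⦃Y : C⦄, (∀ X : C, Q X → Subsingleton (Abelian.Ext X Y 1)) → W Y ∧ R Y
  /-- `Ext¹`-orthogonality of `𝒬 ∩ 𝒲` and `ℛ`. -/
  orth₂ : ∀ ⦃X Y : C⦄, Q X → W X → R Y → Subsingleton (Abelian.Ext X Y 1)
  orth₂_left : ∀ ⦃X : C⦄, (∀ Y : C, R Y → Subsingleton (Abelian.Ext X Y 1)) → Q X ∧ W X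
  orth₂_right : ∀ ⦃Y : C⦄, (∀ X : C, Q X → W X → Subsingleton (Abelian.Ext X Y 1)) → R Y
  /-- the cotorsion pair `(𝒬, 𝒲 ∩ ℛ)` has enough projectives. -/
  complete₁_proj : ∀ A : C, ∃ (K E : C) (i : K ⟶ E) (p : E ⟶ A) (w : i ≫ p = 0),
    Q E ∧ W K ∧ R K ∧ (ShortComplex.mk i p w).ShortExact
  /-- the cotorsion pair `(𝒬, 𝒲 ∩ ℛ)` has enough injectives. -/
  complete₁_inj : ∀ A : C, ∃ (E K : C) (i : A ⟶ E) (p : E ⟶ K) (w : i ≫ p = 0),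
    W E ∧ R E ∧ Q K ∧ (ShortComplex.mk i p w).ShortExact
  /-- the cotorsion pair `(𝒬 ∩ 𝒲, ℛ)` has enough projectives. -/
  complete₂_proj : ∀ A : C, ∃ (K E : C) (i : K ⟶ E) (p : E ⟶ A) (w : i ≫ p = 0),
    Q E ∧ W E ∧ R K ∧ (ShortComplex.mk i p w).ShortExact
  /-- the cotorsion pair `(𝒬 ∩ 𝒲, ℛ)` has enough injectives. -/
  complete₂_inj : ∀ A : C, ∃ (E K : C) (i : A ⟶ E) (p : E ⟶ K) (w : i ≫ p = 0),
    R E ∧ Q K ∧ W K ∧ (ShortComplex.mk i p w).ShortExact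
  /-- heredity of `(𝒬, 𝒲 ∩ ℛ)`. -/
  hereditary₁ : ∀ ⦃X Y : C⦄ (i : ℕ), 1 ≤ i → Q X → W Y → R Y →
    Subsingleton (Abelian.Ext X Y i)
  /-- heredity of `(𝒬 ∩ 𝒲, ℛ)`. -/
  hereditary₂ : ∀ ⦃X Y : C⦄ (i : ℕ), 1 ≤ i → Q X → W X → R Y →
    Subsingleton (Abelian.Ext X Y i)

variable [HasExt.{w} C]

/-- An `𝔐`-resolution of `A`: an everywhere-exact `ℤ`-indexed complex obtained by splicing
a resolution of `A` with components in `𝒬 ∩ 𝒲` and kernels in `ℛ` together with a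
coresolution of `A` with components in `𝒲 ∩ ℛ` and cokernels in `𝒬`. -/
structure MResolution (M : HoveyTriple.{w} C) (A : C) where
  c : ChainComplex C ℤ
  ε : c.X 0 ⟶ A
  η : A ⟶ c.X (-1)
  epi : Epi ε
  mono : Mono η
  fac : c.d 0 (-1) = ε ≫ η
  comp_pos : ∀ n : ℤ, 0 ≤ n → M.Q (c.X n) ∧ M.W (c.X n)
  comp_neg : ∀ n : ℤ, n < 0 → M.W (c.X n) ∧ M.R (c.X n)
  exact : ∀ n : ℤ, (ShortComplex.mk (c.d (n + 1) n) (c.d n (n - 1)) (c.d_comp_d _ _ _)).Exact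
  ker_eps : M.R (kernel ε)
  ker_d : ∀ n : ℤ, 1 ≤ n → M.R (kernel (c.d n (n - 1)))
  cok_eta : M.Q (cokernel η)
  cok_d : ∀ n : ℤ, n ≤ -1 → M.Q (cokernel (c.d n (n - 1)))


/-- `QA` is a cofibrant replacement of `A`. -/
def IsCofRep (M : HoveyTriple.{w} C) (QA A : C) : Prop :=
  M.Q QA ∧ ∃ (K : C) (i : K ⟶ QA) (p : QA ⟶ A) (wip : i ≫ p = 0),
    M.W K ∧ M.R K ∧ (ShortComplex.mk i p wip).ShortExact

/-- `RA` is a fibrant replacement of `A`. -/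
def IsFibRep (M : HoveyTriple.{w} C) (RA A : C) : Prop :=
  M.R RA ∧ ∃ (Z : C) (i : A ⟶ RA) (p : RA ⟶ Z) (wip : i ≫ p = 0),
    M.Q Z ∧ M.W Z ∧ (ShortComplex.mk i p wip).ShortExact

/-- `SX` is a suspension `ΣX` of `X`. -/
def IsSusp (M : HoveyTriple.{w} C) (X SX : C) : Prop :=
  ∃ (Wo : C) (i : X ⟶ Wo) (p : Wo ⟶ SX) (wip : i ≫ p = 0),
    M.W Wo ∧ (ShortComplex.mk i p wip).ShortExact

/-- `OX` is a loop `ΩX` of `X`. -/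
def IsLoop (M : HoveyTriple.{w} C) (OX X : C) : Prop :=
  ∃ (Wo : C) (i : OX ⟶ Wo) (p : Wo ⟶ X) (wip : i ≫ p = 0),
    M.W Wo ∧ (ShortComplex.mk i p wip).ShortExact

/-- The weak equivalences of the abelian model structure: maps factoring as an admissible
monomorphism with trivially cofibrant cokernel followed by an admissible epimorphism with
trivially fibrant kernel. -/
def weq (M : HoveyTriple.{w} C) : MorphismProperty C := fun X Y f =>
  ∃ (Z : C) (i : X ⟶ Z) (p : Z ⟶ Y), f = i ≫ p ∧ Mono i ∧ Epi p ∧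
    M.Q (cokernel i) ∧ M.W (cokernel i) ∧ M.W (kernel p) ∧ M.R (kernel p)

namespace Statement18Aux

open CategoryTheory CategoryTheory.Limits CategoryTheory.Abelian

set_option linter.unusedSectionVars false

variable {C : Type u} [Category.{v} C] [Abelian C] [HasExt.{w} C]

/-! ### Transport of `Ext`-subsingleton conditions along isomorphisms -/

lemma ext_sub_left {X X' Y : C} (e : X ≅ X') {n : ℕ}
    (h : Subsingleton (Ext X Y n)) : Subsingleton (Ext X' Y n) := by
  constructor
  intro a b
  have h1 : (Ext.mk₀ e.hom).comp a (zero_add n) = (Ext.mk₀ e.hom).comp b (zero_add n) :=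
    h.elim _ _
  have h2 := congrArg (fun x => (Ext.mk₀ e.inv).comp x (zero_add n)) h1
  simpa only [Ext.mk₀_comp_mk₀_assoc, e.inv_hom_id, Ext.mk₀_id_comp] using h2

lemma ext_sub_right {X Y Y' : C} (e : Y ≅ Y') {n : ℕ}
    (h : Subsingleton (Ext X Y n)) : Subsingleton (Ext X Y' n) := by
  constructor
  intro a b
  have h1 : a.comp (Ext.mk₀ e.inv) (add_zero n) = b.comp (Ext.mk₀ e.inv) (add_zero n) :=
    h.elim _ _
  have h2 := congrArg (fun x => x.comp (Ext.mk₀ e.hom) (add_zero n)) h1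
  simpa only [Ext.comp_assoc_of_third_deg_zero, Ext.mk₀_comp_mk₀, e.inv_hom_id,
    Ext.comp_mk₀_id] using h2

lemma ext_sub_zero_left {X Y : C} (hX : IsZero X) (n : ℕ) : Subsingleton (Ext X Y n) := by
  constructor
  intro a b
  have key : ∀ c : Ext X Y n, c = 0 := by
    intro c
    rw [← Ext.mk₀_id_comp c, hX.eq_of_src (𝟙 X) 0, Ext.mk₀_zero, Ext.zero_comp]
  rw [key a, key b]

lemma ext_sub_zero_right {X Y : C} (hY : IsZero Y) (n : ℕ) : Subsingleton (Ext X Y n) := by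
  constructor
  intro a b
  have key : ∀ c : Ext X Y n, c = 0 := by
    intro c
    rw [← Ext.comp_mk₀_id c, hY.eq_of_src (𝟙 Y) 0, Ext.mk₀_zero, Ext.comp_zero]
  rw [key a, key b]

/-! ### Closure properties of the three classes -/

variable (M : HoveyTriple.{w} C)

lemma W_iso {X Y : C} (e : X ≅ Y) (h : M.W X) : M.W Y :=
  M.thick_retract ⟨e.inv, e.hom, e.inv_hom_id⟩ h

lemma Q_iso {X Y : C} (e : X ≅ Y) (h : M.Q X) : M.Q Y :=
  M.orth₁_left fun _ hW hR => ext_sub_left e (M.orth₁ h hW hR)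

lemma R_iso {X Y : C} (e : X ≅ Y) (h : M.R X) : M.R Y :=
  M.orth₂_right fun _ hQ hW => ext_sub_right e (M.orth₂ hQ hW h)

lemma Q_zero {X : C} (hX : IsZero X) : M.Q X :=
  M.orth₁_left fun _ _ _ => ext_sub_zero_left hX 1

lemma W_zero {X : C} (hX : IsZero X) : M.W X :=
  (M.orth₁_right fun _ _ => ext_sub_zero_right hX 1).1

lemma R_zero {X : C} (hX : IsZero X) : M.R X :=
  (M.orth₁_right fun _ _ => ext_sub_zero_right hX 1).2

/-! ### Basic weak equivalences -/

lemma weq_of_ses_epi {K B A : C} {i : K ⟶ B} {p : B ⟶ A} {w : i ≫ p = 0}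
    (h : (ShortComplex.mk i p w).ShortExact) (hW : M.W K) (hR : M.R K) : weq M p := by
  haveI := h.mono_f
  haveI := h.epi_g
  have eK : kernel p ≅ K :=
    IsLimit.conePointUniqueUpToIso (kernelIsKernel p) h.fIsKernel
  exact ⟨B, 𝟙 B, p, (Category.id_comp p).symm, inferInstance, h.epi_g,
    Q_zero M ((isZero_zero C).of_iso (cokernel.ofEpi (𝟙 B))),
    W_zero M ((isZero_zero C).of_iso (cokernel.ofEpi (𝟙 B))),
    W_iso M eK.symm hW, R_iso M eK.symm hR⟩

lemma weq_of_ses_mono {A B Z : C} {i : A ⟶ B} {p : B ⟶ Z} {w : i ≫ p = 0}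
    (h : (ShortComplex.mk i p w).ShortExact) (hQ : M.Q Z) (hW : M.W Z) : weq M i := by
  haveI := h.mono_f
  haveI := h.epi_g
  have eZ : cokernel i ≅ Z :=
    IsColimit.coconePointUniqueUpToIso (cokernelIsCokernel i) h.gIsCokernel
  exact ⟨B, i, 𝟙 B, (Category.comp_id i).symm, h.mono_f, inferInstance,
    Q_iso M eZ.symm hQ, W_iso M eZ.symm hW,
    W_zero M ((isZero_zero C).of_iso (kernel.ofMono (𝟙 B))),
    R_zero M ((isZero_zero C).of_iso (kernel.ofMono (𝟙 B)))⟩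

/-! ### Pulling back and pushing out short exact sequences -/

lemma P1 {A B X E P : C} {a : A ⟶ B} {p : B ⟶ X} {w : a ≫ p = 0}
    (h : (ShortComplex.mk a p w).ShortExact) (g : E ⟶ X) {fst : P ⟶ B} {snd : P ⟶ E}
    (sq : IsPullback fst snd p g) :
    (ShortComplex.mk (sq.lift a 0 (by rw [w, zero_comp])) snd
      (sq.lift_snd a 0 _)).ShortExact := by
  haveI := h.mono_f
  haveI := h.epi_g
  haveI hm : Mono (sq.lift a 0 (by rw [w, zero_comp])) :=
    mono_of_mono_fac (sq.lift_fst a 0 _)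
  haveI hsnd : Epi snd := by
    rw [← sq.isoPullback_hom_snd]
    exact epi_comp _ _
  refine ShortComplex.ShortExact.mk' ?_ hm hsnd
  apply ShortComplex.exact_of_f_is_kernel
  refine KernelFork.IsLimit.ofι' _ _ (fun {T} t ht => ?_)
  obtain ⟨u, hu⟩ := KernelFork.IsLimit.lift' h.fIsKernel (t ≫ fst) (by
    rw [Category.assoc, sq.w, ← Category.assoc, ht, zero_comp])
  refine ⟨u, ?_⟩
  apply sq.hom_ext
  · rw [Category.assoc, sq.lift_fst]
    exact hu
  · rw [Category.assoc, sq.lift_snd, comp_zero, ht]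

lemma P2 {B Z D K P : C} {p : B ⟶ Z} (hp : Epi p) {k : K ⟶ Z} {q : Z ⟶ D} {w' : k ≫ q = 0}
    (h' : (ShortComplex.mk k q w').ShortExact) {fst : P ⟶ B} {snd : P ⟶ K}
    (sq : IsPullback fst snd p k) :
    (ShortComplex.mk fst (p ≫ q)
      (by rw [← Category.assoc, sq.w, Category.assoc, w', comp_zero])).ShortExact := by
  haveI := h'.mono_f
  haveI := h'.epi_g
  haveI := hp
  haveI hfst : Mono fst := by
    rw [← sq.isoPullback_hom_fst]
    exact mono_comp _ _
  haveI hpq : Epi (p ≫ q) := epi_comp _ _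
  refine ShortComplex.ShortExact.mk' ?_ hfst hpq
  apply ShortComplex.exact_of_f_is_kernel
  refine KernelFork.IsLimit.ofι' _ _ (fun {T} t ht => ?_)
  obtain ⟨u, hu⟩ := KernelFork.IsLimit.lift' h'.fIsKernel (t ≫ p) (by
    show (t ≫ p) ≫ q = 0
    rw [Category.assoc]
    exact ht)
  exact ⟨sq.lift t u hu.symm, sq.lift_fst _ _ _⟩

lemma P1' {Wo B A E P : C} {i : Wo ⟶ B} {p : B ⟶ A} {w : i ≫ p = 0}
    (h : (ShortComplex.mk i p w).ShortExact) (g : Wo ⟶ E) {inl : B ⟶ P} {inr : E ⟶ P}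
    (sq : IsPushout i g inl inr) :
    (ShortComplex.mk inr (sq.desc p 0 (by rw [w, comp_zero])) (sq.inr_desc p 0 _)).ShortExact := by
  haveI := h.mono_f
  haveI := h.epi_g
  haveI hinr : Mono inr := by
    rw [← sq.inr_isoPushout_inv]
    exact mono_comp _ _
  haveI hd : Epi (sq.desc p 0 (by rw [w, comp_zero])) :=
    epi_of_epi_fac (sq.inl_desc p 0 _)
  refine ShortComplex.ShortExact.mk' ?_ hinr hd
  apply ShortComplex.exact_of_g_is_cokernel
  refine CokernelCofork.IsColimit.ofπ' _ _ (fun {T} t ht => ?_)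
  obtain ⟨u, hu⟩ := CokernelCofork.IsColimit.desc' h.gIsCokernel (inl ≫ t) (by
    rw [← Category.assoc, sq.w, Category.assoc, ht, comp_zero])
  refine ⟨u, ?_⟩
  apply sq.hom_ext
  · rw [← Category.assoc, sq.inl_desc]
    exact hu
  · rw [← Category.assoc, sq.inr_desc, zero_comp, ht]

lemma P2' {K Z Y W P : C} {k : K ⟶ Z} {p : Z ⟶ Y} {w : k ≫ p = 0}
    (h : (ShortComplex.mk k p w).ShortExact) {m : Z ⟶ W} (hm : Mono m)
    {inl : W ⟶ P} {inr : Y ⟶ P} (sq : IsPushout m p inl inr) :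
    (ShortComplex.mk (k ≫ m) inl
      (by rw [Category.assoc, sq.w, ← Category.assoc, w, zero_comp])).ShortExact := by
  haveI := h.mono_f
  haveI := h.epi_g
  haveI := hm
  haveI hkm : Mono (k ≫ m) := mono_comp _ _
  haveI hinl : Epi inl := by
    rw [← sq.inl_isoPushout_inv]
    exact epi_comp _ _
  refine ShortComplex.ShortExact.mk' ?_ hkm hinl
  apply ShortComplex.exact_of_g_is_cokernel
  refine CokernelCofork.IsColimit.ofπ' _ _ (fun {T} t ht => ?_)
  obtain ⟨u, hu⟩ := CokernelCofork.IsColimit.desc' h.gIsCokernel (m ≫ t) (by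
    show k ≫ m ≫ t = 0
    rw [← Category.assoc]
    exact ht)
  exact ⟨sq.desc t u hu.symm, sq.inl_desc _ _ _⟩

/-! ### Monomorphisms with weakly trivial cokernel and epimorphisms with weakly
trivial kernel are weak equivalences -/

lemma weq_of_coker_W {A B Wo : C} {i : A ⟶ B} {p : B ⟶ Wo} {w : i ≫ p = 0}
    (h : (ShortComplex.mk i p w).ShortExact) (hWo : M.W Wo) : weq M i := by
  obtain ⟨K, E, k, e, w', hQE, hWE, hRK, hse⟩ := M.complete₂_proj Wo
  have hWK : M.W K := (M.thick_two_of_three _ _ _ hse).2.2 hWE hWo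
  have sq := IsPullback.of_hasPullback p e
  have s1 := P1 h e sq
  have s2 := P1 hse p sq.flip
  haveI := s1.mono_f
  haveI := s2.epi_g
  refine ⟨pullback p e, sq.lift i 0 (by rw [w, zero_comp]), pullback.fst p e,
    (sq.lift_fst i 0 _).symm, s1.mono_f, s2.epi_g, ?_, ?_, ?_, ?_⟩
  · exact Q_iso M (IsColimit.coconePointUniqueUpToIso (cokernelIsCokernel _) s1.gIsCokernel).symm hQE
  · exact W_iso M (IsColimit.coconePointUniqueUpToIso (cokernelIsCokernel _) s1.gIsCokernel).symm hWE
  · exact W_iso M (IsLimit.conePointUniqueUpToIso (kernelIsKernel _) s2.fIsKernel).symm hWK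
  · exact R_iso M (IsLimit.conePointUniqueUpToIso (kernelIsKernel _) s2.fIsKernel).symm hRK

lemma weq_of_ker_W {Wo B A : C} {j : Wo ⟶ B} {p : B ⟶ A} {w : j ≫ p = 0}
    (h : (ShortComplex.mk j p w).ShortExact) (hWo : M.W Wo) : weq M p := by
  obtain ⟨E, K', ι, π, w', hWE, hRE, hQK, hse⟩ := M.complete₁_inj Wo
  have hWK : M.W K' := (M.thick_two_of_three _ _ _ hse).1 hWo hWE
  have sq := IsPushout.of_hasPushout j ι
  have s1 := P1' h ι sq
  have s2 := P1' hse j sq.flip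
  haveI := s2.mono_f
  haveI := s1.epi_g
  refine ⟨pushout j ι, pushout.inl j ι, sq.desc p 0 (by rw [w, comp_zero]),
    (sq.inl_desc p 0 _).symm, s2.mono_f, s1.epi_g, ?_, ?_, ?_, ?_⟩
  · exact Q_iso M (IsColimit.coconePointUniqueUpToIso (cokernelIsCokernel _) s2.gIsCokernel).symm hQK
  · exact W_iso M (IsColimit.coconePointUniqueUpToIso (cokernelIsCokernel _) s2.gIsCokernel).symm hWK
  · exact W_iso M (IsLimit.conePointUniqueUpToIso (kernelIsKernel _) s1.fIsKernel).symm hWE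
  · exact R_iso M (IsLimit.conePointUniqueUpToIso (kernelIsKernel _) s1.fIsKernel).symm hRE

/-! ### The zig-zag relation -/

def Zig (M : HoveyTriple.{w} C) : C → C → Prop :=
  Relation.EqvGen (fun X Y => ∃ f : X ⟶ Y, weq M f)

lemma Zig.of_weq {X Y : C} (f : X ⟶ Y) (hf : weq M f) : Zig M X Y :=
  Relation.EqvGen.rel _ _ ⟨f, hf⟩

lemma Zig.symm {X Y : C} (h : Zig M X Y) : Zig M Y X :=
  Relation.EqvGen.symm _ _ h

lemma Zig.trans {X Y Z : C} (h : Zig M X Y) (h' : Zig M Y Z) : Zig M X Z :=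
  Relation.EqvGen.trans _ _ _ h h'

lemma zig_iso {X Y : C} (h : Zig M X Y) :
    Nonempty ((weq M).Q.obj X ≅ (weq M).Q.obj Y) := by
  induction h with
  | rel X Y hf =>
      obtain ⟨f, hf⟩ := hf
      exact ⟨Localization.isoOfHom (weq M).Q (weq M) f hf⟩
  | refl X => exact ⟨Iso.refl _⟩
  | symm _ _ _ ih => exact ⟨ih.some.symm⟩
  | trans _ _ _ _ _ ih1 ih2 => exact ⟨ih1.some.trans ih2.some⟩

/-! ### Loops -/

lemma loop_exists (X : C) : ∃ O, IsLoop M O X := by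
  obtain ⟨K, E, i, p, w, hQE, hWE, hRK, hse⟩ := M.complete₂_proj X
  exact ⟨K, E, i, p, w, hWE, hse⟩

lemma susp_exists (X : C) : ∃ S, IsSusp M X S := by
  obtain ⟨E, K, i, p, w, hWE, hRE, hQK, hse⟩ := M.complete₁_inj X
  exact ⟨K, E, i, p, w, hWE, hse⟩

lemma loop_unique {X N N' : C} (hO : IsLoop M N X) (hO' : IsLoop M N' X) : Zig M N N' := by
  obtain ⟨V, a, b, wab, hWV, hVse⟩ := hO
  obtain ⟨V', a', b', wab', hWV', hVse'⟩ := hO'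
  have sq := IsPullback.of_hasPullback b b'
  have s1 := P1 hVse b' sq
  have s2 := P1 hVse' b sq.flip
  have z1 : Zig M N (pullback b b') := Zig.of_weq M _ (weq_of_coker_W M s1 hWV')
  have z2 : Zig M N' (pullback b b') := Zig.of_weq M _ (weq_of_coker_W M s2 hWV)
  exact (z1.trans M (z2.symm M))

lemma susp_unique {X S S' : C} (hS : IsSusp M X S) (hS' : IsSusp M X S') : Zig M S S' := by
  obtain ⟨V, a, b, wab, hWV, hVse⟩ := hS
  obtain ⟨V', a', b', wab', hWV', hVse'⟩ := hS'
  have sq := IsPushout.of_hasPushout a a'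
  have s1 := P1' hVse a' sq
  have s2 := P1' hVse' a sq.flip
  have z1 : Zig M (pushout a a') S := Zig.of_weq M _ (weq_of_ker_W M s1 hWV')
  have z2 : Zig M (pushout a a') S' := Zig.of_weq M _ (weq_of_ker_W M s2 hWV)
  exact ((z1.symm M).trans M z2)

lemma loop_mono {X Z O OZ : C} (i : X ⟶ Z) (hi : Mono i)
    (hWU : M.W (cokernel i))
    (hO : IsLoop M O X) (hOZ : IsLoop M OZ Z) : Zig M O OZ := by
  obtain ⟨WZ, a, p', w1, hWWZ, hse1⟩ := hOZ
  haveI := hi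
  have ses2 : (ShortComplex.mk i (cokernel.π i) (cokernel.condition i)).ShortExact :=
    ShortComplex.ShortExact.mk'
      (ShortComplex.exact_of_g_is_cokernel _ (cokernelIsCokernel i)) hi inferInstance
  have sq := IsPullback.of_hasPullback p' i
  have s1 := P1 hse1 i sq
  have s2 := P2 hse1.epi_g ses2 sq
  have hWP : M.W (pullback p' i) :=
    (M.thick_two_of_three _ _ _ s2).2.2 hWWZ hWU
  exact loop_unique M hO ⟨pullback p' i, _, _, _, hWP, s1⟩

lemma loop_epi {Z Y OZ O' : C} (p : Z ⟶ Y) (hp : Epi p)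
    (hWK : M.W (kernel p))
    (hOZ : IsLoop M OZ Z) (hO' : IsLoop M O' Y) : Zig M OZ O' := by
  obtain ⟨WY, a, b, w1, hWWY, hse1⟩ := hO'
  haveI := hp
  have ses2 : (ShortComplex.mk (kernel.ι p) p (kernel.condition p)).ShortExact :=
    ShortComplex.ShortExact.mk'
      (ShortComplex.exact_of_f_is_kernel _ (kernelIsKernel p)) inferInstance hp
  have sq := IsPullback.of_hasPullback b p
  have s1 := P1 hse1 p sq
  have s2 := P1 ses2 b sq.flip
  have hWP : M.W (pullback b p) :=
    (M.thick_two_of_three _ _ _ s2).2.1 hWK hWWY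
  exact loop_unique M hOZ ⟨pullback b p, _, _, _, hWP, s1⟩

lemma susp_mono {X Z S SZ : C} (i : X ⟶ Z) (hi : Mono i)
    (hWU : M.W (cokernel i))
    (hS : IsSusp M X S) (hSZ : IsSusp M Z SZ) : Zig M S SZ := by
  obtain ⟨WX, ι, q, w1, hWWX, hse1⟩ := hS
  haveI := hi
  have ses2 : (ShortComplex.mk i (cokernel.π i) (cokernel.condition i)).ShortExact :=
    ShortComplex.ShortExact.mk'
      (ShortComplex.exact_of_g_is_cokernel _ (cokernelIsCokernel i)) hi inferInstance
  have sq := IsPushout.of_hasPushout ι i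
  have s1 := P1' hse1 i sq
  have s2 := P1' ses2 ι sq.flip
  have hWP : M.W (pushout ι i) :=
    (M.thick_two_of_three _ _ _ s2).2.1 hWWX hWU
  exact Zig.symm M (susp_unique M hSZ ⟨pushout ι i, _, _, _, hWP, s1⟩)

lemma susp_epi {Z Y SZ S' : C} (p : Z ⟶ Y) (hp : Epi p)
    (hWK : M.W (kernel p))
    (hSZ : IsSusp M Z SZ) (hS' : IsSusp M Y S') : Zig M SZ S' := by
  obtain ⟨WZ, ι, q, w1, hWWZ, hse1⟩ := hSZ
  haveI := hp
  have ses2 : (ShortComplex.mk (kernel.ι p) p (kernel.condition p)).ShortExact :=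
    ShortComplex.ShortExact.mk'
      (ShortComplex.exact_of_f_is_kernel _ (kernelIsKernel p)) inferInstance hp
  have sq := IsPushout.of_hasPushout ι p
  have s1 := P1' hse1 p sq
  haveI := hse1.mono_f
  have s2 := P2' ses2 hse1.mono_f sq
  have hWP : M.W (pushout ι p) :=
    (M.thick_two_of_three _ _ _ s2).1 hWK hWWZ
  exact Zig.symm M (susp_unique M hS' ⟨pushout ι p, _, _, _, hWP, s1⟩)

lemma loop_weq {X Y O O' : C} (f : X ⟶ Y) (hf : weq M f)
    (hO : IsLoop M O X) (hO' : IsLoop M O' Y) : Zig M O O' := by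
  obtain ⟨Z, i, p, hfac, hi, hp, hQc, hWc, hWk, hRk⟩ := hf
  obtain ⟨OZ, hOZ⟩ := loop_exists M Z
  exact (loop_mono M i hi hWc hO hOZ).trans M (loop_epi M p hp hWk hOZ hO')

lemma susp_weq {X Y S S' : C} (f : X ⟶ Y) (hf : weq M f)
    (hS : IsSusp M X S) (hS' : IsSusp M Y S') : Zig M S S' := by
  obtain ⟨Z, i, p, hfac, hi, hp, hQc, hWc, hWk, hRk⟩ := hf
  obtain ⟨SZ, hSZ⟩ := susp_exists M Z
  exact (susp_mono M i hi hWc hS hSZ).trans M (susp_epi M p hp hWk hSZ hS')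

lemma loop_zig {X Y : C} (h : Zig M X Y) :
    ∀ (O O' : C), IsLoop M O X → IsLoop M O' Y → Zig M O O' := by
  induction h with
  | rel X Y hf =>
      intro O O' hO hO'
      obtain ⟨f, hf⟩ := hf
      exact loop_weq M f hf hO hO'
  | refl X =>
      intro O O' hO hO'
      exact loop_unique M hO hO'
  | symm X Y h ih =>
      intro O O' hO hO'
      exact Zig.symm M (ih O' O hO' hO)
  | trans X Y Z h1 h2 ih1 ih2 =>
      intro O O' hO hO'
      obtain ⟨OY, hOY⟩ := loop_exists M Y
      exact (ih1 O OY hO hOY).trans M (ih2 OY O' hOY hO')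

lemma susp_zig {X Y : C} (h : Zig M X Y) :
    ∀ (S S' : C), IsSusp M X S → IsSusp M Y S' → Zig M S S' := by
  induction h with
  | rel X Y hf =>
      intro S S' hS hS'
      obtain ⟨f, hf⟩ := hf
      exact susp_weq M f hf hS hS'
  | refl X =>
      intro S S' hS hS'
      exact susp_unique M hS hS'
  | symm X Y h ih =>
      intro S S' hS hS'
      exact Zig.symm M (ih S' S hS' hS)
  | trans X Y Z h1 h2 ih1 ih2 =>
      intro S S' hS hS'
      obtain ⟨SY, hSY⟩ := susp_exists M Y
      exact (ih1 S SY hS hSY).trans M (ih2 SY S' hSY hS')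

lemma zig_of_cofRep {QA A : C} (h : IsCofRep M QA A) : Zig M QA A := by
  obtain ⟨hQ, K, i, p, wip, hWK, hRK, hse⟩ := h
  exact Zig.of_weq M p (weq_of_ses_epi M hse hWK hRK)

lemma zig_of_fibRep {RA A : C} (h : IsFibRep M RA A) : Zig M RA A := by
  obtain ⟨hR, Z, i, p, wip, hQZ, hWZ, hse⟩ := h
  exact Zig.symm M (Zig.of_weq M i (weq_of_ses_mono M hse hQZ hWZ))

end Statement18Aux


open Statement18Aux in
/-- canonical isomorphisms in `Ho(𝔐)` (realized as the localization of `𝒜` at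
the weak equivalences): `ΩⁿQA ≅ QΩⁿA`, `ΣⁿQA ≅ QΣⁿA`, `ΩⁿRA ≅ RΩⁿA` and `ΣⁿRA ≅ RΣⁿA`,
regardless of the short exact sequences used to compute the cofibrant replacements `Q`,
fibrant replacements `R`, loops `Ω` and suspensions `Σ`. -/
theorem statement18 (M : HoveyTriple.{w} C) (A : C) (n : ℕ)
    (QA RA : C) (hQA : IsCofRep M QA A) (hRA : IsFibRep M RA A)
    -- loop and suspension towers on `A`
    (OA : ℕ → C) (hOA0 : OA 0 = A) (hOA : ∀ k, IsLoop M (OA (k + 1)) (OA k))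
    (SA : ℕ → C) (hSA0 : SA 0 = A) (hSA : ∀ k, IsSusp M (SA k) (SA (k + 1)))
    -- loop and suspension towers on `QA` and on `RA`
    (OQA : ℕ → C) (hOQA0 : OQA 0 = QA) (hOQA : ∀ k, IsLoop M (OQA (k + 1)) (OQA k))
    (SQA : ℕ → C) (hSQA0 : SQA 0 = QA) (hSQA : ∀ k, IsSusp M (SQA k) (SQA (k + 1)))
    (ORA : ℕ → C) (hORA0 : ORA 0 = RA) (hORA : ∀ k, IsLoop M (ORA (k + 1)) (ORA k))
    (SRA : ℕ → C) (hSRA0 : SRA 0 = RA) (hSRA : ∀ k, IsSusp M (SRA k) (SRA (k + 1)))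
    -- replacements of `ΩⁿA` and `ΣⁿA`
    (Qo : C) (hQo : IsCofRep M Qo (OA n)) (Qs : C) (hQs : IsCofRep M Qs (SA n))
    (Ro : C) (hRo : IsFibRep M Ro (OA n)) (Rs : C) (hRs : IsFibRep M Rs (SA n)) :
    Nonempty ((weq M).Q.obj (OQA n) ≅ (weq M).Q.obj Qo) ∧
    Nonempty ((weq M).Q.obj (SQA n) ≅ (weq M).Q.obj Qs) ∧
    Nonempty ((weq M).Q.obj (ORA n) ≅ (weq M).Q.obj Ro) ∧
    Nonempty ((weq M).Q.obj (SRA n) ≅ (weq M).Q.obj Rs) := by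
  have hq : Zig M QA A := zig_of_cofRep M hQA
  have hr : Zig M RA A := zig_of_fibRep M hRA
  have hQo' : Zig M Qo (OA n) := zig_of_cofRep M hQo
  have hQs' : Zig M Qs (SA n) := zig_of_cofRep M hQs
  have hRo' : Zig M Ro (OA n) := zig_of_fibRep M hRo
  have hRs' : Zig M Rs (SA n) := zig_of_fibRep M hRs
  have hOQ : ∀ k, Zig M (OQA k) (OA k) := by
    intro k
    induction k with
    | zero => rw [hOQA0, hOA0]; exact hq
    | succ k ih => exact loop_zig M ih _ _ (hOQA k) (hOA k)
  have hSQ : ∀ k, Zig M (SQA k) (SA k) := by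
    intro k
    induction k with
    | zero => rw [hSQA0, hSA0]; exact hq
    | succ k ih => exact susp_zig M ih _ _ (hSQA k) (hSA k)
  have hOR : ∀ k, Zig M (ORA k) (OA k) := by
    intro k
    induction k with
    | zero => rw [hORA0, hOA0]; exact hr
    | succ k ih => exact loop_zig M ih _ _ (hORA k) (hOA k)
  have hSR : ∀ k, Zig M (SRA k) (SA k) := by
    intro k
    induction k with
    | zero => rw [hSRA0, hSA0]; exact hr
    | succ k ih => exact susp_zig M ih _ _ (hSRA k) (hSA k)
  exact ⟨zig_iso M ((hOQ n).trans M (Zig.symm M hQo')),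
    zig_iso M ((hSQ n).trans M (Zig.symm M hQs')),
    zig_iso M ((hOR n).trans M (Zig.symm M hRo')),
    zig_iso M ((hSR n).trans M (Zig.symm M hRs'))⟩
end
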